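/- arXiv:math/0506035 — 12 statements merged into one kernel-verified Lean document; each statement's English description precedes it below -/
import Mathlib

section
/- Let A₀, A₁, A₂ be real polynomials in one variable with A₂ not identically zero, and let g₀, g₁ be real polynomials in two variables with g₁ not identically zero. Let I ⊆ ℝ be an open interval and let w : I → ℝ be twice differentiable with A₂(x)·w''(x) + A₁(x)·w'(x) + A₀(x)·w(x) = 0 and w(x) ≠ 0 for all x ∈ I. Let y : I → ℝ be differentiable and satisfy, for all x ∈ I, the relation g₁(x,y(x))·w'(x) = g₀(x,y(x))·w(x), together with g₁(x,y(x)) ≠ 0 and P(x,y(x)) ≠ 0, where P(x,y) = A₂(x)·(g₀·∂g₁/∂y − g₁·∂g₀/∂y)(x,y). Then for every x ∈ I, y'(x) = Q(x,y(x)) / P(x,y(x)), where Q(x,y) = A₀(x)·g₁² + A₁(x)·g₁·g₀ + A₂(x)·g₀² + A₂(x)·(g₁·∂g₀/∂x − g₀·∂g₁/∂x). -/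
/-! Differentiating the relation `g₁(x, y) w' = g₀(x, y) w` along the curve gives one linear
relation between `y'`, `w`, `w'` and `w''`. Multiplying it by `A₂ g₁`, eliminating `w''` with the
ODE and then `w'` with the relation itself leaves `(y' P − Q) w = 0`, and `w ≠ 0`. -/

/-- Evaluation of a polynomial in two variables at `(x, y)`. -/
noncomputable def ev2 (p : MvPolynomial (Fin 2) ℝ) (x y : ℝ) : ℝ :=
  MvPolynomial.eval ![x, y] p

/-- Partial derivative with respect to the first variable. -/
noncomputable def pdX (p : MvPolynomial (Fin 2) ℝ) : MvPolynomial (Fin 2) ℝ :=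
  MvPolynomial.pderiv (0 : Fin 2) p

/-- Partial derivative with respect to the second variable. -/
noncomputable def pdY (p : MvPolynomial (Fin 2) ℝ) : MvPolynomial (Fin 2) ℝ :=
  MvPolynomial.pderiv (1 : Fin 2) p

/-- `P(x,y) = A₂(x) (g₀ ∂g₁/∂y − g₁ ∂g₀/∂y)`. -/
noncomputable def Psys (A₂ : Polynomial ℝ) (g₀ g₁ : MvPolynomial (Fin 2) ℝ) (x y : ℝ) : ℝ :=
  A₂.eval x * (ev2 g₀ x y * ev2 (pdY g₁) x y - ev2 g₁ x y * ev2 (pdY g₀) x y)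

/-- `Q(x,y) = A₀ g₁² + A₁ g₁ g₀ + A₂ g₀² + A₂ (g₁ ∂g₀/∂x − g₀ ∂g₁/∂x)`. -/
noncomputable def Qsys (A₀ A₁ A₂ : Polynomial ℝ) (g₀ g₁ : MvPolynomial (Fin 2) ℝ)
    (x y : ℝ) : ℝ :=
  A₀.eval x * (ev2 g₁ x y) ^ 2 + A₁.eval x * ev2 g₁ x y * ev2 g₀ x y
    + A₂.eval x * (ev2 g₀ x y) ^ 2
    + A₂.eval x * (ev2 g₁ x y * ev2 (pdX g₀) x y - ev2 g₀ x y * ev2 (pdX g₁) x y)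

open Filter Topology

theorem HasDerivAt.ev2_comp (p : MvPolynomial (Fin 2) ℝ) {X Y : ℝ → ℝ} {x' y' t : ℝ}
    (hX : HasDerivAt X x' t) (hY : HasDerivAt Y y' t) :
    HasDerivAt (fun s => ev2 p (X s) (Y s))
      (ev2 (pdX p) (X t) (Y t) * x' + ev2 (pdY p) (X t) (Y t) * y') t := by
  induction p using MvPolynomial.induction_on with
  | C a => simpa [ev2, pdX, pdY] using hasDerivAt_const t a
  | add p q hp hq =>
    have h := hp.add hq
    simp only [ev2, pdX, pdY, map_add] at h ⊢
    exact h.congr_deriv (by ring)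
  | mul_X p i hp =>
    fin_cases i
    · have h := hp.mul hX
      simp only [ev2, pdX, pdY, map_mul, MvPolynomial.eval_X] at h ⊢
      exact h.congr_deriv (by simp; ring)
    · have h := hp.mul hY
      simp only [ev2, pdX, pdY, map_mul, MvPolynomial.eval_X] at h ⊢
      exact h.congr_deriv (by simp; ring)

theorem HasDerivAt.ev2_mul_eq_ev2_mul {g₀ g₁ : MvPolynomial (Fin 2) ℝ} {u v y : ℝ → ℝ}
    {u' v' y' x : ℝ} (hu : HasDerivAt u u' x) (hv : HasDerivAt v v' x) (hy : HasDerivAt y y' x)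
    (hrel : ∀ᶠ t in 𝓝 x, ev2 g₁ t (y t) * u t = ev2 g₀ t (y t) * v t) :
    (ev2 (pdX g₁) x (y x) + ev2 (pdY g₁) x (y x) * y') * u x + ev2 g₁ x (y x) * u'
      = (ev2 (pdX g₀) x (y x) + ev2 (pdY g₀) x (y x) * y') * v x + ev2 g₀ x (y x) * v' := by
  have h₁ := ((hasDerivAt_id x).ev2_comp g₁ hy).mul hu
  have h₀ := ((hasDerivAt_id x).ev2_comp g₀ hy).mul hv
  simp only [id, mul_one] at h₁ h₀
  exact h₁.unique (h₀.congr_of_eventuallyEq hrel)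

theorem mul_Psys_eq_Qsys (A₀ A₁ A₂ : Polynomial ℝ) (g₀ g₁ : MvPolynomial (Fin 2) ℝ)
    {x η η' w₀ w₁ w₂ : ℝ} (hw₀ : w₀ ≠ 0)
    (hode : A₂.eval x * w₂ + A₁.eval x * w₁ + A₀.eval x * w₀ = 0)
    (hrel : ev2 g₁ x η * w₁ = ev2 g₀ x η * w₀)
    (hrel' : (ev2 (pdX g₁) x η + ev2 (pdY g₁) x η * η') * w₁ + ev2 g₁ x η * w₂
      = (ev2 (pdX g₀) x η + ev2 (pdY g₀) x η * η') * w₀ + ev2 g₀ x η * w₁) :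
    η' * Psys A₂ g₀ g₁ x η = Qsys A₀ A₁ A₂ g₀ g₁ x η := by
  refine mul_right_cancel₀ hw₀ ?_
  unfold Psys Qsys
  linear_combination (A₂.eval x * ev2 g₁ x η) * hrel' - ev2 g₁ x η ^ 2 * hode
    - (A₂.eval x * ev2 (pdX g₁) x η + A₂.eval x * ev2 (pdY g₁) x η * η'
        - A₂.eval x * ev2 g₀ x η - A₁.eval x * ev2 g₁ x η) * hrel

theorem stmt_0_general
    (A₀ A₁ A₂ : Polynomial ℝ)
    (g₀ g₁ : MvPolynomial (Fin 2) ℝ)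
    (I : Set ℝ) (hIopen : IsOpen I)
    (w : ℝ → ℝ)
    (hw₁ : ∀ x ∈ I, DifferentiableAt ℝ w x)
    (hw₂ : ∀ x ∈ I, DifferentiableAt ℝ (deriv w) x)
    (hode : ∀ x ∈ I,
      A₂.eval x * deriv (deriv w) x + A₁.eval x * deriv w x + A₀.eval x * w x = 0)
    (hwne : ∀ x ∈ I, w x ≠ 0)
    (y : ℝ → ℝ)
    (hy : ∀ x ∈ I, DifferentiableAt ℝ y x)
    (hrel : ∀ x ∈ I, ev2 g₁ x (y x) * deriv w x = ev2 g₀ x (y x) * w x)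
    (hPne : ∀ x ∈ I, Psys A₂ g₀ g₁ x (y x) ≠ 0) :
    ∀ x ∈ I, deriv y x = Qsys A₀ A₁ A₂ g₀ g₁ x (y x) / Psys A₂ g₀ g₁ x (y x) := by
  intro x hx
  rw [eq_div_iff (hPne x hx)]
  refine mul_Psys_eq_Qsys A₀ A₁ A₂ g₀ g₁ (hwne x hx) (hode x hx) (hrel x hx) ?_
  exact (hw₂ x hx).hasDerivAt.ev2_mul_eq_ev2_mul (hw₁ x hx).hasDerivAt (hy x hx).hasDerivAt
    (eventually_of_mem (hIopen.mem_nhds hx) hrel)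

/-- Theorem 2 of the paper: the functional change `w'(x) = g(x, y(x)) w(x)`, with
`g = g₀/g₁`, transforms nonzero solutions of `A₂ w'' + A₁ w' + A₀ w = 0` into
solutions of the rational equation `dy/dx = Q(x,y)/P(x,y)`. -/
theorem stmt_0
    (A₀ A₁ A₂ : Polynomial ℝ) (hA₂ : A₂ ≠ 0)
    (g₀ g₁ : MvPolynomial (Fin 2) ℝ) (hg₁ : g₁ ≠ 0)
    (I : Set ℝ) (hIopen : IsOpen I) (hIconn : I.OrdConnected)
    (w : ℝ → ℝ)
    (hw₁ : ∀ x ∈ I, DifferentiableAt ℝ w x)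
    (hw₂ : ∀ x ∈ I, DifferentiableAt ℝ (deriv w) x)
    (hode : ∀ x ∈ I,
      A₂.eval x * deriv (deriv w) x + A₁.eval x * deriv w x + A₀.eval x * w x = 0)
    (hwne : ∀ x ∈ I, w x ≠ 0)
    (y : ℝ → ℝ)
    (hy : ∀ x ∈ I, DifferentiableAt ℝ y x)
    (hrel : ∀ x ∈ I, ev2 g₁ x (y x) * deriv w x = ev2 g₀ x (y x) * w x)
    (hg₁ne : ∀ x ∈ I, ev2 g₁ x (y x) ≠ 0)
    (hPne : ∀ x ∈ I, Psys A₂ g₀ g₁ x (y x) ≠ 0) :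
    ∀ x ∈ I, deriv y x = Qsys A₀ A₁ A₂ g₀ g₁ x (y x) / Psys A₂ g₀ g₁ x (y x) :=
  stmt_0_general A₀ A₁ A₂ g₀ g₁ I hIopen w hw₁ hw₂ hode hwne y hy hrel hPne
end

section
/- Let A₀, A₁, A₂ be real polynomials in one variable and g₀, g₁ real polynomials in two variables. Define P(x,y) = A₂(x)·(g₀·∂g₁/∂y − g₁·∂g₀/∂y)(x,y) and Q(x,y) = A₀(x)·g₁² + A₁(x)·g₁·g₀ + A₂(x)·g₀² + A₂(x)·(g₁·∂g₀/∂x − g₀·∂g₁/∂x). Let I ⊆ ℝ be an open interval and w : I → ℝ twice differentiable with A₂(x)·w''(x) + A₁(x)·w'(x) + A₀(x)·w(x) = 0 on I. Define f(x,y) = g₁(x,y)·w'(x) − g₀(x,y)·w(x). Then for all x ∈ I and all y ∈ ℝ, P(x,y)·∂f/∂x(x,y) + Q(x,y)·∂f/∂y(x,y) = k(x,y)·f(x,y), where k(x,y) = (A₀(x)·∂g₁/∂y + A₁(x)·∂g₀/∂y)·g₁ + A₂(x)·g₀·∂g₀/∂y + A₂(x)·(∂g₁/∂y·∂g₀/∂x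 − ∂g₀/∂y·∂g₁/∂x). -/
/-- The cofactor `k(x,y)` of Theorem 3 of the paper. -/
noncomputable def kco (A₀ A₁ A₂ : Polynomial ℝ) (g₀ g₁ : MvPolynomial (Fin 2) ℝ)
    (x y : ℝ) : ℝ :=
  (A₀.eval x * ev2 (pdY g₁) x y + A₁.eval x * ev2 (pdY g₀) x y) * ev2 g₁ x y
    + A₂.eval x * ev2 g₀ x y * ev2 (pdY g₀) x y
    + A₂.eval x * (ev2 (pdY g₁) x y * ev2 (pdX g₀) x y - ev2 (pdY g₀) x y * ev2 (pdX g₁) x y)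

/-! `f` is linear in `(w, w')` with coefficients polynomial in `(x, y)`, so both partial
derivatives of `f` are explicit; `w''` enters only through `∂f/∂x`, and after substituting
`A₂ w'' = -(A₁ w' + A₀ w)` the identity `P ∂f/∂x + Q ∂f/∂y = k f` is a polynomial identity. -/

namespace MvPolynomial

variable {σ 𝕜 : Type*} [NontriviallyNormedField 𝕜] [DecidableEq σ]

theorem hasDerivAt_eval_update (p : MvPolynomial σ 𝕜) (v : σ → 𝕜) (i : σ) (t : 𝕜) :
    HasDerivAt (fun s => eval (Function.update v i s) p)
      (eval (Function.update v i t) (pderiv i p)) t := by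
  induction p using MvPolynomial.induction_on with
  | C a => simpa using hasDerivAt_const t a
  | add p q hp hq => simp only [map_add]; exact hp.add hq
  | mul_X p j hp =>
    simp only [map_mul, map_add, eval_X, pderiv_mul, pderiv_X]
    by_cases hji : j = i
    · subst hji
      simp only [Function.update_self, Pi.single_eq_same, map_one, mul_one]
      exact (hp.mul (hasDerivAt_id' t)).congr_deriv (by ring)
    · simp only [Function.update_of_ne hji, Pi.single_eq_of_ne hji, map_zero, mul_zero, add_zero]
      exact hp.mul_const (v j)

end MvPolynomial

theorem hasDerivAt_ev2_left (p : MvPolynomial (Fin 2) ℝ) (x y : ℝ) :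
    HasDerivAt (fun t => ev2 p t y) (ev2 (pdX p) x y) x := by
  have hv (s : ℝ) : Function.update ![x, y] 0 s = ![s, y] := by
    ext i; fin_cases i <;> rfl
  have h := p.hasDerivAt_eval_update ![x, y] 0 x
  simp only [hv] at h
  exact h

theorem hasDerivAt_ev2_right (p : MvPolynomial (Fin 2) ℝ) (x y : ℝ) :
    HasDerivAt (fun t => ev2 p x t) (ev2 (pdY p) x y) y := by
  have hv (s : ℝ) : Function.update ![x, y] 1 s = ![x, s] := by
    ext i; fin_cases i <;> rfl
  have h := p.hasDerivAt_eval_update ![x, y] 1 y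
  simp only [hv] at h
  exact h

theorem stmt_1_general
    (A₀ A₁ A₂ : Polynomial ℝ) (g₀ g₁ : MvPolynomial (Fin 2) ℝ)
    (I : Set ℝ)
    (w : ℝ → ℝ)
    (hw₁ : ∀ x ∈ I, DifferentiableAt ℝ w x)
    (hw₂ : ∀ x ∈ I, DifferentiableAt ℝ (deriv w) x)
    (hode : ∀ x ∈ I,
      A₂.eval x * deriv (deriv w) x + A₁.eval x * deriv w x + A₀.eval x * w x = 0)
    (f : ℝ → ℝ → ℝ)
    (hf : ∀ x y, f x y = ev2 g₁ x y * deriv w x - ev2 g₀ x y * w x) :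
    ∀ x ∈ I, ∀ y : ℝ,
      Psys A₂ g₀ g₁ x y * deriv (fun t => f t y) x
        + Qsys A₀ A₁ A₂ g₀ g₁ x y * deriv (fun t => f x t) y
      = kco A₀ A₁ A₂ g₀ g₁ x y * f x y := by
  intro x hx y
  have hfx : HasDerivAt (fun t => f t y)
      (ev2 (pdX g₁) x y * deriv w x + ev2 g₁ x y * deriv (deriv w) x
        - (ev2 (pdX g₀) x y * w x + ev2 g₀ x y * deriv w x)) x := by
    simp only [hf]
    exact ((hasDerivAt_ev2_left g₁ x y).mul (hw₂ x hx).hasDerivAt).sub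
      ((hasDerivAt_ev2_left g₀ x y).mul (hw₁ x hx).hasDerivAt)
  have hfy : HasDerivAt (fun t => f x t)
      (ev2 (pdY g₁) x y * deriv w x - ev2 (pdY g₀) x y * w x) y := by
    simp only [hf]
    exact ((hasDerivAt_ev2_right g₁ x y).mul_const _).sub
      ((hasDerivAt_ev2_right g₀ x y).mul_const _)
  rw [hfx.deriv, hfy.deriv, hf x y]
  simp only [Psys, Qsys, kco]
  -- the only `w''` term on the left is `P g₁ w''`; the ODE eliminates it
  linear_combination
    ev2 g₁ x y * (ev2 g₀ x y * ev2 (pdY g₁) x y - ev2 g₁ x y * ev2 (pdY g₀) x y) * hode x hx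

/-- Theorem 3 of the paper: `f(x,y) = g₁(x,y) w'(x) − g₀(x,y) w(x)` is an invariant of
the system `ẋ = P, ẏ = Q` with the polynomial cofactor `k`. -/
theorem stmt_1
    (A₀ A₁ A₂ : Polynomial ℝ) (g₀ g₁ : MvPolynomial (Fin 2) ℝ)
    (I : Set ℝ) (hIopen : IsOpen I) (hIconn : I.OrdConnected)
    (w : ℝ → ℝ)
    (hw₁ : ∀ x ∈ I, DifferentiableAt ℝ w x)
    (hw₂ : ∀ x ∈ I, DifferentiableAt ℝ (deriv w) x)
    (hode : ∀ x ∈ I,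
      A₂.eval x * deriv (deriv w) x + A₁.eval x * deriv w x + A₀.eval x * w x = 0)
    (f : ℝ → ℝ → ℝ)
    (hf : ∀ x y, f x y = ev2 g₁ x y * deriv w x - ev2 g₀ x y * w x) :
    ∀ x ∈ I, ∀ y : ℝ,
      Psys A₂ g₀ g₁ x y * deriv (fun t => f t y) x
        + Qsys A₀ A₁ A₂ g₀ g₁ x y * deriv (fun t => f x t) y
      = kco A₀ A₁ A₂ g₀ g₁ x y * f x y :=
  stmt_1_general A₀ A₁ A₂ g₀ g₁ I w hw₁ hw₂ hode f hf
end

section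
/- Let A₀, A₁, A₂ be real polynomials in one variable and g₀, g₁ real polynomials in two variables. Define P(x,y) = A₂(x)·(g₀·∂g₁/∂y − g₁·∂g₀/∂y)(x,y). Let I ⊆ ℝ be an open interval on which A₂(x) ≠ 0, let x₀ ∈ I, and define q(x) = A₂(x)·exp(∫_{x₀}^{x} A₁(s)/A₂(s) ds) for x ∈ I. Then for all x ∈ I and all y ∈ ℝ, P(x,y)·q'(x) = (A₁(x) + A₂'(x))·(g₀·∂g₁/∂y − g₁·∂g₀/∂y)(x,y)·q(x); that is, q, viewed as a function of (x,y) independent of y, is an invariant of the system ẋ = P, ẏ = Q with cofactor (A₁(x)+A₂'(x))·(g₀ ∂g₁/∂y − g₁ ∂g₀/∂y). -/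
/-! By the fundamental theorem of calculus and the product rule, `A₂ q' = (A₁ + A₂') q` on `I`;
the claim is this identity multiplied by `g₀ ∂g₁/∂y − g₁ ∂g₀/∂y`. -/

open Polynomial

theorem hasDerivAt_integral_of_continuousOn {f : ℝ → ℝ} {I : Set ℝ} (hIopen : IsOpen I)
    (hIconn : I.OrdConnected) (hf : ContinuousOn f I) {a x : ℝ} (ha : a ∈ I) (hx : x ∈ I) :
    HasDerivAt (fun t => ∫ s in a..t, f s) (f x) x :=
  intervalIntegral.integral_hasDerivAt_right
    ((hf.mono (hIconn.uIcc_subset ha hx)).intervalIntegrable)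
    (hf.stronglyMeasurableAtFilter hIopen x hx) (hf.continuousAt (hIopen.mem_nhds hx))

theorem HasDerivAt.mul_exp_of_hasDerivAt_div {p F : ℝ → ℝ} {p' r x : ℝ}
    (hp : HasDerivAt p p' x) (hpx : p x ≠ 0) (hF : HasDerivAt F (r / p x) x) :
    HasDerivAt (fun t => p t * Real.exp (F t)) ((r + p') * Real.exp (F x)) x :=
  (hp.mul hF.exp).congr_deriv (by field_simp; ring)

theorem eval_mul_deriv_eq_of_eq_mul_exp_integral (A₁ A₂ : ℝ[X]) {I : Set ℝ} (hIopen : IsOpen I)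
    (hIconn : I.OrdConnected) (hA₂ : ∀ x ∈ I, A₂.eval x ≠ 0) {x₀ : ℝ} (hx₀ : x₀ ∈ I)
    {q : ℝ → ℝ} (hq : ∀ x, q x = A₂.eval x * Real.exp (∫ s in x₀..x, A₁.eval s / A₂.eval s))
    {x : ℝ} (hx : x ∈ I) :
    A₂.eval x * deriv q x = (A₁.eval x + (derivative A₂).eval x) * q x := by
  have hcont : ContinuousOn (fun s => A₁.eval s / A₂.eval s) I :=
    A₁.continuousOn.div A₂.continuousOn hA₂
  have hderiv := (A₂.hasDerivAt x).mul_exp_of_hasDerivAt_div (hA₂ x hx)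
    (hasDerivAt_integral_of_continuousOn hIopen hIconn hcont hx₀ hx)
  rw [funext hq, hderiv.deriv]
  ring

theorem stmt_3_general
    (A₁ A₂ : Polynomial ℝ) (g₀ g₁ : MvPolynomial (Fin 2) ℝ)
    (I : Set ℝ) (hIopen : IsOpen I) (hIconn : I.OrdConnected)
    (hA₂ : ∀ x ∈ I, A₂.eval x ≠ 0) (x₀ : ℝ) (hx₀ : x₀ ∈ I)
    (q : ℝ → ℝ)
    (hq : ∀ x, q x = A₂.eval x * Real.exp (∫ s in x₀..x, A₁.eval s / A₂.eval s)) :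
    ∀ x ∈ I, ∀ y : ℝ,
      Psys A₂ g₀ g₁ x y * deriv q x
        = (A₁.eval x + (Polynomial.derivative A₂).eval x)
            * (ev2 g₀ x y * ev2 (pdY g₁) x y - ev2 g₁ x y * ev2 (pdY g₀) x y) * q x := by
  intro x hx y
  have hq' := eval_mul_deriv_eq_of_eq_mul_exp_integral A₁ A₂ hIopen hIconn hA₂ hx₀ hq hx
  rw [Psys, mul_right_comm, hq']
  ring

/-- Lemma 5 of the paper: `q(x) = A₂(x) exp(∫_{x₀}^x A₁/A₂)` is an invariant of the
system `ẋ = P, ẏ = Q` with cofactor `(A₁ + A₂')(g₀ ∂g₁/∂y − g₁ ∂g₀/∂y)`. -/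
theorem stmt_3
    (A₀ A₁ A₂ : Polynomial ℝ) (g₀ g₁ : MvPolynomial (Fin 2) ℝ)
    (I : Set ℝ) (hIopen : IsOpen I) (hIconn : I.OrdConnected)
    (hA₂ : ∀ x ∈ I, A₂.eval x ≠ 0) (x₀ : ℝ) (hx₀ : x₀ ∈ I)
    (q : ℝ → ℝ)
    (hq : ∀ x, q x = A₂.eval x * Real.exp (∫ s in x₀..x, A₁.eval s / A₂.eval s)) :
    ∀ x ∈ I, ∀ y : ℝ,
      Psys A₂ g₀ g₁ x y * deriv q x
        = (A₁.eval x + (Polynomial.derivative A₂).eval x)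
            * (ev2 g₀ x y * ev2 (pdY g₁) x y - ev2 g₁ x y * ev2 (pdY g₀) x y) * q x :=
  stmt_3_general A₁ A₂ g₀ g₁ I hIopen hIconn hA₂ x₀ hx₀ q hq
end

section
/- Let A₀, A₁, h₀, h₁ be real polynomials in one variable and g₀, g₁ real polynomials in two variables. Let I ⊆ ℝ be an open interval containing 0 on which A₁(x) ≠ 0 and h₁(x) ≠ 0, and set A(x) = A₀(x)/A₁(x), h(x) = h₀(x)/h₁(x), and Φ(x) = exp(−∫₀ˣ A(s) ds) · ∫₀ˣ exp(∫₀ˢ A(r) dr) h(s) ds. Let w : I → ℝ be a nonzero solution of w'(x) + A(x)·w(x) = 0. Let y : I → ℝ be differentiable and satisfy, for all x ∈ I, w(x) = g₀(x,y(x))/g₁(x,y(x)) − Φ(x), together with g₁(x,y(x)) ≠ 0 and Pₗ(x,y(x)) ≠ 0, where Pₗ(x,y) = A₁(x)·h₁(x)·(g₁·∂g₀/∂y − g₀·∂g₁/∂y)(x,y). Then for every x ∈ I, y'(x) = Qₗ(x,y(x))/Pₗ(x,y(x)), where Qₗ(x,y) = A₁(x)·h₀(x)·g₁² − A₀(x)·h₁(x)·g₀·g₁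 − A₁(x)·h₁(x)·(g₁·∂g₀/∂x − g₀·∂g₁/∂x). -/
/-- The rational function `A(x) = A₀(x)/A₁(x)`. -/
noncomputable def Afun (A₀ A₁ : Polynomial ℝ) (x : ℝ) : ℝ := A₀.eval x / A₁.eval x

/-- The rational function `h(x) = h₀(x)/h₁(x)`. -/
noncomputable def hfun (h₀ h₁ : Polynomial ℝ) (x : ℝ) : ℝ := h₀.eval x / h₁.eval x

/-- `Φ(x) = exp(−∫₀ˣ A) ∫₀ˣ exp(∫₀ˢ A) h(s) ds`. -/
noncomputable def Phi (A₀ A₁ h₀ h₁ : Polynomial ℝ) (x : ℝ) : ℝ :=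
  Real.exp (-(∫ s in (0:ℝ)..x, Afun A₀ A₁ s)) *
    ∫ s in (0:ℝ)..x, Real.exp (∫ r in (0:ℝ)..s, Afun A₀ A₁ r) * hfun h₀ h₁ s

/-- `Pₗ(x,y) = A₁ h₁ (g₁ ∂g₀/∂y − g₀ ∂g₁/∂y)`. -/
noncomputable def Pl (A₁ h₁ : Polynomial ℝ) (g₀ g₁ : MvPolynomial (Fin 2) ℝ) (x y : ℝ) : ℝ :=
  A₁.eval x * h₁.eval x * (ev2 g₁ x y * ev2 (pdY g₀) x y - ev2 g₀ x y * ev2 (pdY g₁) x y)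

/-- `Qₗ(x,y) = A₁ h₀ g₁² − A₀ h₁ g₀ g₁ − A₁ h₁ (g₁ ∂g₀/∂x − g₀ ∂g₁/∂x)`. -/
noncomputable def Ql (A₀ A₁ h₀ h₁ : Polynomial ℝ) (g₀ g₁ : MvPolynomial (Fin 2) ℝ)
    (x y : ℝ) : ℝ :=
  A₁.eval x * h₀.eval x * (ev2 g₁ x y) ^ 2
    - A₀.eval x * h₁.eval x * ev2 g₀ x y * ev2 g₁ x y
    - A₁.eval x * h₁.eval x * (ev2 g₁ x y * ev2 (pdX g₀) x y - ev2 g₀ x y * ev2 (pdX g₁) x y)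

open MvPolynomial in
theorem MvPolynomial.hasDerivAt_eval_comp {𝕜 σ : Type*} [NontriviallyNormedField 𝕜] [Fintype σ]
    (p : MvPolynomial σ 𝕜) {u : 𝕜 → σ → 𝕜} {u' : σ → 𝕜} {t : 𝕜}
    (hu : ∀ i, HasDerivAt (fun s => u s i) (u' i) t) :
    HasDerivAt (fun s => eval (u s) p) (∑ i, eval (u t) (pderiv i p) * u' i) t := by
  classical
  induction p using MvPolynomial.induction_on with
  | C a => simpa using hasDerivAt_const t a
  | add p q hp hq =>
    simp only [map_add, add_mul, Finset.sum_add_distrib]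
    exact hp.add hq
  | mul_X p j hp =>
    simp only [map_mul, eval_X, pderiv_mul, pderiv_X, map_add, add_mul, Finset.sum_add_distrib]
    refine (hp.mul (hu j)).congr_deriv ?_
    simp [Pi.single_apply, Finset.sum_mul, mul_right_comm]

theorem hasDerivAt_ev2 (p : MvPolynomial (Fin 2) ℝ) {y : ℝ → ℝ} {y' x : ℝ}
    (hy : HasDerivAt y y' x) :
    HasDerivAt (fun t => ev2 p t (y t)) (ev2 (pdX p) x (y x) + ev2 (pdY p) x (y x) * y') x := by
  have hu : ∀ i, HasDerivAt (fun t => ![t, y t] i) (![1, y'] i) x := by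
    intro i
    fin_cases i
    exacts [hasDerivAt_id x, hy]
  simpa [ev2, pdX, pdY, Fin.sum_univ_two] using p.hasDerivAt_eval_comp hu

theorem ContinuousOn.hasDerivAt_integral {E : Type*} [NormedAddCommGroup E] [NormedSpace ℝ E]
    [CompleteSpace E] {f : ℝ → E} {I : Set ℝ} {a t : ℝ} (hf : ContinuousOn f I) (hI : IsOpen I)
    (hIc : I.OrdConnected) (ha : a ∈ I) (ht : t ∈ I) :
    HasDerivAt (fun x => ∫ s in a..x, f s) (f t) t :=
  intervalIntegral.integral_hasDerivAt_right
    ((hf.mono (hIc.uIcc_subset ha ht)).intervalIntegrable)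
    (hf.stronglyMeasurableAtFilter hI t ht) ((hf t ht).continuousAt (hI.mem_nhds ht))

open Real in
theorem hasDerivAt_exp_neg_integral_mul_integral {a b : ℝ → ℝ} {I : Set ℝ} {c t : ℝ}
    (ha : ContinuousOn a I) (hb : ContinuousOn b I) (hI : IsOpen I) (hIc : I.OrdConnected)
    (hc : c ∈ I) (ht : t ∈ I) :
    HasDerivAt
      (fun x => exp (-∫ s in c..x, a s) * ∫ s in c..x, exp (∫ r in c..s, a r) * b s)
      (b t - a t * (exp (-∫ s in c..t, a s) * ∫ s in c..t, exp (∫ r in c..s, a r) * b s)) t := by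
  have hF : ∀ x ∈ I, HasDerivAt (fun x => ∫ s in c..x, a s) (a x) x :=
    fun x hx => ha.hasDerivAt_integral hI hIc hc hx
  have hExpF : ContinuousOn (fun s => exp (∫ r in c..s, a r)) I :=
    fun x hx => (hF x hx).continuousAt.continuousWithinAt.rexp
  have hJ := (hExpF.mul hb).hasDerivAt_integral hI hIc hc ht
  refine ((hF t ht).neg.exp.mul hJ).congr_deriv ?_
  simp only [Pi.neg_apply, Pi.mul_apply]
  have hcancel : exp (-∫ s in c..t, a s) * exp (∫ s in c..t, a s) = 1 := by
    rw [← exp_add, neg_add_cancel, exp_zero]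
  linear_combination b t * hcancel

theorem hasDerivAt_Phi {A₀ A₁ h₀ h₁ : Polynomial ℝ} {I : Set ℝ} {x : ℝ} (hI : IsOpen I)
    (hIc : I.OrdConnected) (h0 : (0 : ℝ) ∈ I) (hA₁ : ∀ x ∈ I, A₁.eval x ≠ 0)
    (hh₁ : ∀ x ∈ I, h₁.eval x ≠ 0) (hx : x ∈ I) :
    HasDerivAt (Phi A₀ A₁ h₀ h₁)
      (hfun h₀ h₁ x - Afun A₀ A₁ x * Phi A₀ A₁ h₀ h₁ x) x :=
  hasDerivAt_exp_neg_integral_mul_integral (A₀.continuousOn.div A₁.continuousOn hA₁)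
    (h₀.continuousOn.div h₁.continuousOn hh₁) hI hIc h0 hx

theorem mul_Pl_eq_Ql {A₀ A₁ h₀ h₁ : Polynomial ℝ} {g₀ g₁ : MvPolynomial (Fin 2) ℝ}
    {x y y' : ℝ} (hA₁ : A₁.eval x ≠ 0) (hh₁ : h₁.eval x ≠ 0) (hg₁ : ev2 g₁ x y ≠ 0)
    (h : ((ev2 (pdX g₀) x y + ev2 (pdY g₀) x y * y') * ev2 g₁ x y
        - ev2 g₀ x y * (ev2 (pdX g₁) x y + ev2 (pdY g₁) x y * y')) / ev2 g₁ x y ^ 2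
      = hfun h₀ h₁ x - Afun A₀ A₁ x * (ev2 g₀ x y / ev2 g₁ x y)) :
    y' * Pl A₁ h₁ g₀ g₁ x y = Ql A₀ A₁ h₀ h₁ g₀ g₁ x y := by
  unfold hfun Afun at h
  field_simp at h
  unfold Pl Ql
  linear_combination h

theorem stmt_5_general
    (A₀ A₁ h₀ h₁ : Polynomial ℝ) (g₀ g₁ : MvPolynomial (Fin 2) ℝ)
    (I : Set ℝ) (hIopen : IsOpen I) (hIconn : I.OrdConnected) (h0I : (0:ℝ) ∈ I)
    (hA₁ : ∀ x ∈ I, A₁.eval x ≠ 0) (hh₁ : ∀ x ∈ I, h₁.eval x ≠ 0)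
    (w : ℝ → ℝ)
    (hode : ∀ x ∈ I, deriv w x + Afun A₀ A₁ x * w x = 0)
    (y : ℝ → ℝ)
    (hy : ∀ x ∈ I, DifferentiableAt ℝ y x)
    (hrel : ∀ x ∈ I, w x = ev2 g₀ x (y x) / ev2 g₁ x (y x) - Phi A₀ A₁ h₀ h₁ x)
    (hg₁ne : ∀ x ∈ I, ev2 g₁ x (y x) ≠ 0)
    (hPne : ∀ x ∈ I, Pl A₁ h₁ g₀ g₁ x (y x) ≠ 0) :
    ∀ x ∈ I, deriv y x = Ql A₀ A₁ h₀ h₁ g₀ g₁ x (y x) / Pl A₁ h₁ g₀ g₁ x (y x) := by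
  intro x hx
  have hyx := (hy x hx).hasDerivAt
  have hG := (hasDerivAt_ev2 g₀ hyx).div (hasDerivAt_ev2 g₁ hyx) (hg₁ne x hx)
  have hΦ : HasDerivAt (Phi A₀ A₁ h₀ h₁) _ x := hasDerivAt_Phi hIopen hIconn h0I hA₁ hh₁ hx
  have hw : HasDerivAt w _ x :=
    (hG.sub hΦ).congr_of_eventuallyEq (Filter.eventuallyEq_of_mem (hIopen.mem_nhds hx) hrel)
  refine eq_div_of_mul_eq (hPne x hx) (mul_Pl_eq_Ql (hA₁ x hx) (hh₁ x hx) (hg₁ne x hx) ?_)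
  have hlin := hode x hx
  rw [hw.deriv, hrel x hx] at hlin
  linear_combination hlin

/-- Theorem 7 of the paper: the functional change
`w(x) = g(x,y(x)) − exp(−∫₀ˣ A) ∫₀ˣ exp(∫₀ˢ A) h(s) ds`, with `g = g₀/g₁`, transforms
nonzero solutions of `w' + A(x) w = 0` into solutions of `dy/dx = Qₗ/Pₗ`. -/
theorem stmt_5
    (A₀ A₁ h₀ h₁ : Polynomial ℝ) (g₀ g₁ : MvPolynomial (Fin 2) ℝ)
    (I : Set ℝ) (hIopen : IsOpen I) (hIconn : I.OrdConnected) (h0I : (0:ℝ) ∈ I)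
    (hA₁ : ∀ x ∈ I, A₁.eval x ≠ 0) (hh₁ : ∀ x ∈ I, h₁.eval x ≠ 0)
    (w : ℝ → ℝ)
    (hw : ∀ x ∈ I, DifferentiableAt ℝ w x)
    (hode : ∀ x ∈ I, deriv w x + Afun A₀ A₁ x * w x = 0)
    (hwne : ∃ x ∈ I, w x ≠ 0)
    (y : ℝ → ℝ)
    (hy : ∀ x ∈ I, DifferentiableAt ℝ y x)
    (hrel : ∀ x ∈ I, w x = ev2 g₀ x (y x) / ev2 g₁ x (y x) - Phi A₀ A₁ h₀ h₁ x)
    (hg₁ne : ∀ x ∈ I, ev2 g₁ x (y x) ≠ 0)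
    (hPne : ∀ x ∈ I, Pl A₁ h₁ g₀ g₁ x (y x) ≠ 0) :
    ∀ x ∈ I, deriv y x = Ql A₀ A₁ h₀ h₁ g₀ g₁ x (y x) / Pl A₁ h₁ g₀ g₁ x (y x) :=
  stmt_5_general A₀ A₁ h₀ h₁ g₀ g₁ I hIopen hIconn h0I hA₁ hh₁ w hode y hy hrel hg₁ne hPne
end

section
/- Let Ω₁ be a real polynomial of degree at most 2, L a real polynomial of degree at most 1, and n ∈ ℝ. Let I ⊆ ℝ be an open interval and w : I → ℝ twice differentiable with Ω₁(x)·w''(x) + (Ω₁'(x) − 2L(x))·w'(x) + (n/2)·(4L'(x) − (n+1)·Ω₁''(x))·w(x) = 0 on I. Define Q(x,y) = (2n+1)·L'(x)·Ω₁(x) − (n(n+1)/2)·Ω₁(x)·Ω₁''(x) − L(x)² + y² and f(x,y) = Ω₁(x)·w'(x) + (y − L(x))·w(x). Then for all x ∈ I and y ∈ ℝ, Ω₁(x)·∂f/∂x(x,y) + Q(x,y)·∂f/∂y(x,y) = (y + L(x))·f(x,y). -/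
/-!
Along `ẋ = Ω₁`, `ẏ = Q` the defect `Ω₁ ∂ₓf + Q ∂ᵧf − (y + L) f` of the invariance equation
for `f = Ω₁ w' + (y − L) w` is independent of `y` (the `y²` of `Q` cancels against `y · y w`
in `(y + L) f`), and it equals exactly `Ω₁` times the left-hand side of the linear ODE for `w`.
-/

/-- `Q(x,y) = (2n+1) L'(x) Ω₁(x) − (n(n+1)/2) Ω₁(x) Ω₁''(x) − L(x)² + y²` for the
family of quadratic systems with an invariant algebraic curve linear in `y`. -/
noncomputable def Qalg (Ω₁ L : Polynomial ℝ) (n x y : ℝ) : ℝ :=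
  (2 * n + 1) * (Polynomial.derivative L).eval x * Ω₁.eval x
    - (n * (n + 1) / 2) * Ω₁.eval x * (Polynomial.derivative (Polynomial.derivative Ω₁)).eval x
    - (L.eval x) ^ 2 + y ^ 2

open Polynomial

theorem hasDerivAt_eval_mul_deriv_add_sub_eval_mul (P L : ℝ[X]) {w : ℝ → ℝ} {x : ℝ} (y : ℝ)
    (hw : DifferentiableAt ℝ w x) (hw' : DifferentiableAt ℝ (deriv w) x) :
    HasDerivAt (fun t => P.eval t * deriv w t + (y - L.eval t) * w t)
      (P.derivative.eval x * deriv w x + P.eval x * deriv (deriv w) x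
        - L.derivative.eval x * w x + (y - L.eval x) * deriv w x) x := by
  have h := ((P.hasDerivAt x).mul hw'.hasDerivAt).add
    (((hasDerivAt_const x y).sub (L.hasDerivAt x)).mul hw.hasDerivAt)
  exact h.congr_deriv (by simp only [Pi.sub_apply]; ring)

theorem deriv_add_sub_mul_const (a b c y : ℝ) : deriv (fun t => a + (t - b) * c) y = c := by
  simp

theorem stmt_10_general
    (Ω₁ L : Polynomial ℝ) (n : ℝ)
    (I : Set ℝ)
    (w : ℝ → ℝ)
    (hw₁ : ∀ x ∈ I, DifferentiableAt ℝ w x)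
    (hw₂ : ∀ x ∈ I, DifferentiableAt ℝ (deriv w) x)
    (hode : ∀ x ∈ I,
      Ω₁.eval x * deriv (deriv w) x
        + ((Polynomial.derivative Ω₁).eval x - 2 * L.eval x) * deriv w x
        + (n / 2) * (4 * (Polynomial.derivative L).eval x
            - (n + 1) * (Polynomial.derivative (Polynomial.derivative Ω₁)).eval x) * w x = 0)
    (f : ℝ → ℝ → ℝ)
    (hf : ∀ x y, f x y = Ω₁.eval x * deriv w x + (y - L.eval x) * w x) :
    ∀ x ∈ I, ∀ y : ℝ,
      Ω₁.eval x * deriv (fun t => f t y) x + Qalg Ω₁ L n x y * deriv (fun t => f x t) y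
        = (y + L.eval x) * f x y := by
  intro x hx y
  simp only [hf]
  rw [(hasDerivAt_eval_mul_deriv_add_sub_eval_mul Ω₁ L y (hw₁ x hx) (hw₂ x hx)).deriv,
    deriv_add_sub_mul_const, Qalg]
  linear_combination Ω₁.eval x * hode x hx

/-- For any solution `w` of `Ω₁ w'' + (Ω₁' − 2L) w' + (n/2)(4L' − (n+1)Ω₁'') w = 0`, the
function `f(x,y) = Ω₁(x) w'(x) + (y − L(x)) w(x)` is an invariant of the quadratic system
`ẋ = Ω₁(x)`, `ẏ = Q(x,y)` with cofactor `y + L(x)`. -/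
theorem stmt_10
    (Ω₁ L : Polynomial ℝ) (hΩ : Ω₁.degree ≤ 2) (hL : L.degree ≤ 1) (n : ℝ)
    (I : Set ℝ) (hIopen : IsOpen I) (hIconn : I.OrdConnected)
    (w : ℝ → ℝ)
    (hw₁ : ∀ x ∈ I, DifferentiableAt ℝ w x)
    (hw₂ : ∀ x ∈ I, DifferentiableAt ℝ (deriv w) x)
    (hode : ∀ x ∈ I,
      Ω₁.eval x * deriv (deriv w) x
        + ((Polynomial.derivative Ω₁).eval x - 2 * L.eval x) * deriv w x
        + (n / 2) * (4 * (Polynomial.derivative L).eval x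
            - (n + 1) * (Polynomial.derivative (Polynomial.derivative Ω₁)).eval x) * w x = 0)
    (f : ℝ → ℝ → ℝ)
    (hf : ∀ x y, f x y = Ω₁.eval x * deriv w x + (y - L.eval x) * w x) :
    ∀ x ∈ I, ∀ y : ℝ,
      Ω₁.eval x * deriv (fun t => f t y) x + Qalg Ω₁ L n x y * deriv (fun t => f x t) y
        = (y + L.eval x) * f x y :=
  stmt_10_general Ω₁ L n I w hw₁ hw₂ hode f hf
end

section
/- Let Ω₁ be a real polynomial of degree at most 2, L a real polynomial of degree at most 1, and n ∈ ℝ. Let I ⊆ ℝ be an open interval and let w₁, w₂ : I → ℝ be twice differentiable solutions of Ω₁(x)·w''(x) + (Ω₁'(x) − 2L(x))·w'(x) + (n/2)·(4L'(x) − (n+1)·Ω₁''(x))·w(x) = 0 on I. Define Q(x,y) = (2n+1)·L'(x)·Ω₁(x) − (n(n+1)/2)·Ω₁(x)·Ω₁''(x) − L(x)² + y², fᵢ(x,y) = Ω₁(x)·wᵢ'(x) + (y − L(x))·wᵢ(x) for i = 1,2, and H(x,y) = f₁(x,y)/f₂(x,y). Then at every point (x,y) with x ∈ I and f₂(x,y)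 ≠ 0, one has Ω₁(x)·∂H/∂x(x,y) + Q(x,y)·∂H/∂y(x,y) = 0. -/
/-- The invariant `fᵢ(x,y) = Ω₁(x) wᵢ'(x) + (y − L(x)) wᵢ(x)` built from a solution `w`. -/
noncomputable def fAlg (Ω₁ L : Polynomial ℝ) (w : ℝ → ℝ) (x y : ℝ) : ℝ :=
  Ω₁.eval x * deriv w x + (y - L.eval x) * w x

/-!
Each `fᵢ` is an invariant curve of the vector field `Ω₁ ∂ₓ + Q ∂_y` with cofactor `y + L(x)`:
differentiating `fᵢ` along the field and eliminating `Ω₁ wᵢ''` with the linear ODE leaves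
`(y + L) fᵢ`. Two invariants with the same cofactor have a quotient annihilated by the field.
-/

open Polynomial

theorem deriv_div_add_deriv_div_eq_zero_of_cofactor {f₁ f₂ : ℝ → ℝ → ℝ}
    {x y P Q K a₁ a₂ b₁ b₂ : ℝ}
    (h₁x : HasDerivAt (fun t => f₁ t y) a₁ x) (h₂x : HasDerivAt (fun t => f₂ t y) a₂ x)
    (h₁y : HasDerivAt (f₁ x) b₁ y) (h₂y : HasDerivAt (f₂ x) b₂ y)
    (hK₁ : P * a₁ + Q * b₁ = K * f₁ x y) (hK₂ : P * a₂ + Q * b₂ = K * f₂ x y)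
    (hf₂ : f₂ x y ≠ 0) :
    P * deriv (fun t => f₁ t y / f₂ t y) x + Q * deriv (fun t => f₁ x t / f₂ x t) y = 0 := by
  rw [(h₁x.fun_div h₂x hf₂).deriv, (h₁y.fun_div h₂y hf₂).deriv]
  field_simp
  linear_combination f₂ x y * hK₁ - f₁ x y * hK₂

section Invariant

variable (Ω₁ L : Polynomial ℝ) {w : ℝ → ℝ} {x : ℝ} (y : ℝ)

theorem hasDerivAt_fAlg_fst (hw : DifferentiableAt ℝ w x)
    (hw' : DifferentiableAt ℝ (deriv w) x) :
    HasDerivAt (fun t => fAlg Ω₁ L w t y)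
      ((derivative Ω₁).eval x * deriv w x + Ω₁.eval x * deriv (deriv w) x
        - (derivative L).eval x * w x + (y - L.eval x) * deriv w x) x := by
  have hΩw := (Ω₁.hasDerivAt x).fun_mul hw'.hasDerivAt
  have hLw := ((hasDerivAt_const x y).fun_sub (L.hasDerivAt x)).fun_mul hw.hasDerivAt
  exact (hΩw.add hLw).congr_deriv (by ring)

theorem hasDerivAt_fAlg_snd : HasDerivAt (fAlg Ω₁ L w x) (w x) y := by
  have h := (((hasDerivAt_id y).sub_const (L.eval x)).mul_const (w x)).const_add
    (Ω₁.eval x * deriv w x)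
  exact h.congr_deriv (one_mul _)

theorem fAlg_cofactor {n : ℝ}
    (hode : Ω₁.eval x * deriv (deriv w) x
        + ((derivative Ω₁).eval x - 2 * L.eval x) * deriv w x
        + (n / 2) * (4 * (derivative L).eval x
            - (n + 1) * (derivative (derivative Ω₁)).eval x) * w x = 0) :
    Ω₁.eval x * ((derivative Ω₁).eval x * deriv w x + Ω₁.eval x * deriv (deriv w) x
        - (derivative L).eval x * w x + (y - L.eval x) * deriv w x)
      + Qalg Ω₁ L n x y * w x = (y + L.eval x) * fAlg Ω₁ L w x y := by
  unfold Qalg fAlg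
  linear_combination Ω₁.eval x * hode

end Invariant

theorem stmt_11_general
    (Ω₁ L : Polynomial ℝ) (n : ℝ)
    (I : Set ℝ)
    (w₁ w₂ : ℝ → ℝ)
    (hw₁₁ : ∀ x ∈ I, DifferentiableAt ℝ w₁ x)
    (hw₁₂ : ∀ x ∈ I, DifferentiableAt ℝ (deriv w₁) x)
    (hode₁ : ∀ x ∈ I,
      Ω₁.eval x * deriv (deriv w₁) x
        + ((Polynomial.derivative Ω₁).eval x - 2 * L.eval x) * deriv w₁ x
        + (n / 2) * (4 * (Polynomial.derivative L).eval x
            - (n + 1) * (Polynomial.derivative (Polynomial.derivative Ω₁)).eval x) * w₁ x = 0)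
    (hw₂₁ : ∀ x ∈ I, DifferentiableAt ℝ w₂ x)
    (hw₂₂ : ∀ x ∈ I, DifferentiableAt ℝ (deriv w₂) x)
    (hode₂ : ∀ x ∈ I,
      Ω₁.eval x * deriv (deriv w₂) x
        + ((Polynomial.derivative Ω₁).eval x - 2 * L.eval x) * deriv w₂ x
        + (n / 2) * (4 * (Polynomial.derivative L).eval x
            - (n + 1) * (Polynomial.derivative (Polynomial.derivative Ω₁)).eval x) * w₂ x = 0)
    (H : ℝ → ℝ → ℝ)
    (hH : ∀ x y, H x y = fAlg Ω₁ L w₁ x y / fAlg Ω₁ L w₂ x y) :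
    ∀ x ∈ I, ∀ y : ℝ, fAlg Ω₁ L w₂ x y ≠ 0 →
      Ω₁.eval x * deriv (fun t => H t y) x + Qalg Ω₁ L n x y * deriv (fun t => H x t) y
        = 0 := by
  intro x hx y hf₂
  simp only [hH]
  exact deriv_div_add_deriv_div_eq_zero_of_cofactor
    (hasDerivAt_fAlg_fst Ω₁ L y (hw₁₁ x hx) (hw₁₂ x hx))
    (hasDerivAt_fAlg_fst Ω₁ L y (hw₂₁ x hx) (hw₂₂ x hx))
    (hasDerivAt_fAlg_snd Ω₁ L y) (hasDerivAt_fAlg_snd Ω₁ L y)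
    (fAlg_cofactor Ω₁ L y (hode₁ x hx)) (fAlg_cofactor Ω₁ L y (hode₂ x hx)) hf₂

/-- For two solutions `w₁, w₂` of `Ω₁ w'' + (Ω₁' − 2L) w' + (n/2)(4L' − (n+1)Ω₁'') w = 0`,
`H = f₁/f₂` is a first integral of the quadratic system `ẋ = Ω₁(x)`, `ẏ = Q(x,y)`
wherever `f₂ ≠ 0`, for every real value of the parameter `n`. -/
theorem stmt_11
    (Ω₁ L : Polynomial ℝ) (hΩ : Ω₁.degree ≤ 2) (hL : L.degree ≤ 1) (n : ℝ)
    (I : Set ℝ) (hIopen : IsOpen I) (hIconn : I.OrdConnected)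
    (w₁ w₂ : ℝ → ℝ)
    (hw₁₁ : ∀ x ∈ I, DifferentiableAt ℝ w₁ x)
    (hw₁₂ : ∀ x ∈ I, DifferentiableAt ℝ (deriv w₁) x)
    (hode₁ : ∀ x ∈ I,
      Ω₁.eval x * deriv (deriv w₁) x
        + ((Polynomial.derivative Ω₁).eval x - 2 * L.eval x) * deriv w₁ x
        + (n / 2) * (4 * (Polynomial.derivative L).eval x
            - (n + 1) * (Polynomial.derivative (Polynomial.derivative Ω₁)).eval x) * w₁ x = 0)
    (hw₂₁ : ∀ x ∈ I, DifferentiableAt ℝ w₂ x)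
    (hw₂₂ : ∀ x ∈ I, DifferentiableAt ℝ (deriv w₂) x)
    (hode₂ : ∀ x ∈ I,
      Ω₁.eval x * deriv (deriv w₂) x
        + ((Polynomial.derivative Ω₁).eval x - 2 * L.eval x) * deriv w₂ x
        + (n / 2) * (4 * (Polynomial.derivative L).eval x
            - (n + 1) * (Polynomial.derivative (Polynomial.derivative Ω₁)).eval x) * w₂ x = 0)
    (H : ℝ → ℝ → ℝ)
    (hH : ∀ x y, H x y = fAlg Ω₁ L w₁ x y / fAlg Ω₁ L w₂ x y) :
    ∀ x ∈ I, ∀ y : ℝ, fAlg Ω₁ L w₂ x y ≠ 0 →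
      Ω₁.eval x * deriv (fun t => H t y) x + Qalg Ω₁ L n x y * deriv (fun t => H x t) y
        = 0 :=
  stmt_11_general Ω₁ L n I w₁ w₂ hw₁₁ hw₁₂ hode₁ hw₂₁ hw₂₂ hode₂ H hH
end

section
/- Let ℓ ∈ ℝ with ℓ ≠ 1/2. Let x, y : J → ℝ be differentiable functions on an open interval J ⊆ ℝ with y(t) ≠ 0 for all t ∈ J, satisfying the Lotka–Volterra system ẋ = x·(1 − x/2 + y), ẏ = y·(−(2ℓ+1)/(2ℓ−1) + x/2 − y). Define u(t) = x(t)·y(t) and v(t) = (1 − 2ℓ)/(4·y(t)). Then u and v are differentiable on J and satisfy u̇ = 2u/(1 − 2ℓ) and v̇ = (1 − 2ℓ)/4 + ((2ℓ+1)/(2ℓ−1))·v + (2/(2ℓ−1))·u·v². -/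
/-! Both equations are the product and quotient rules followed by an identity of rational
functions. In `d(xy)/dt` the terms `±x²y/2` and `±xy²` cancel, leaving
`xy (1 − (2ℓ+1)/(2ℓ−1)) = 2xy/(1 − 2ℓ)`; in `d/dt ((1 − 2ℓ)/(4y)) = −(1 − 2ℓ) ẏ/(4y²)` the three
terms of `ẏ/y` become, after substituting `y = (1 − 2ℓ)/(4v)` and `x = 4uv/(1 − 2ℓ)`, the three
terms of the `v`-equation. -/

section LotkaVolterra

variable {x y : ℝ → ℝ} {ℓ t : ℝ}

theorem hasDerivAt_mul_of_lotkaVolterra (hℓ : ℓ ≠ 1 / 2)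
    (hx : HasDerivAt x (x t * (1 - x t / 2 + y t)) t)
    (hy : HasDerivAt y (y t * (-((2 * ℓ + 1) / (2 * ℓ - 1)) + x t / 2 - y t)) t) :
    HasDerivAt (fun s => x s * y s) (2 * (x t * y t) / (1 - 2 * ℓ)) t := by
  have h₁ : 2 * ℓ - 1 ≠ 0 := fun h => hℓ (by linarith)
  have h₂ : 1 - 2 * ℓ ≠ 0 := fun h => hℓ (by linarith)
  refine (hx.mul hy).congr_deriv ?_
  field_simp
  ring

theorem hasDerivAt_div_of_lotkaVolterra (hℓ : ℓ ≠ 1 / 2) (hyt : y t ≠ 0)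
    (hy : HasDerivAt y (y t * (-((2 * ℓ + 1) / (2 * ℓ - 1)) + x t / 2 - y t)) t) :
    HasDerivAt (fun s => (1 - 2 * ℓ) / (4 * y s))
      ((1 - 2 * ℓ) / 4 + ((2 * ℓ + 1) / (2 * ℓ - 1)) * ((1 - 2 * ℓ) / (4 * y t))
        + (2 / (2 * ℓ - 1)) * (x t * y t) * ((1 - 2 * ℓ) / (4 * y t)) ^ 2) t := by
  have h₁ : 2 * ℓ - 1 ≠ 0 := fun h => hℓ (by linarith)
  refine ((hasDerivAt_const t (1 - 2 * ℓ)).div (hy.const_mul 4)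
    (mul_ne_zero four_ne_zero hyt)).congr_deriv ?_
  field_simp
  ring

end LotkaVolterra

theorem stmt_12_general
    (ℓ : ℝ) (hℓ : ℓ ≠ 1 / 2)
    (J : Set ℝ)
    (x y : ℝ → ℝ)
    (hx : ∀ t ∈ J, DifferentiableAt ℝ x t)
    (hy : ∀ t ∈ J, DifferentiableAt ℝ y t)
    (hyne : ∀ t ∈ J, y t ≠ 0)
    (hxd : ∀ t ∈ J, deriv x t = x t * (1 - x t / 2 + y t))
    (hyd : ∀ t ∈ J, deriv y t = y t * (-((2 * ℓ + 1) / (2 * ℓ - 1)) + x t / 2 - y t))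
    (u v : ℝ → ℝ)
    (hu : ∀ t, u t = x t * y t)
    (hv : ∀ t, v t = (1 - 2 * ℓ) / (4 * y t)) :
    ∀ t ∈ J, DifferentiableAt ℝ u t ∧ DifferentiableAt ℝ v t ∧
      deriv u t = 2 * u t / (1 - 2 * ℓ) ∧
      deriv v t = (1 - 2 * ℓ) / 4 + ((2 * ℓ + 1) / (2 * ℓ - 1)) * v t
        + (2 / (2 * ℓ - 1)) * u t * (v t) ^ 2 := by
  intro t ht
  have hxt : HasDerivAt x _ t := hxd t ht ▸ (hx t ht).hasDerivAt
  have hyt : HasDerivAt y _ t := hyd t ht ▸ (hy t ht).hasDerivAt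
  have hdu := hasDerivAt_mul_of_lotkaVolterra hℓ hxt hyt
  have hdv := hasDerivAt_div_of_lotkaVolterra hℓ (hyne t ht) hyt
  rw [← funext hu, ← hu] at hdu
  rw [← funext hv, ← hv, ← hu] at hdv
  exact ⟨hdu.differentiableAt, hdv.differentiableAt, hdu.deriv, hdv.deriv⟩

/-- The birational change of variables `u = x y`, `v = (1 − 2ℓ)/(4y)` carries the
Lotka–Volterra system `ẋ = x(1 − x/2 + y)`, `ẏ = y(−(2ℓ+1)/(2ℓ−1) + x/2 − y)` into the
system `u̇ = 2u/(1 − 2ℓ)`, `v̇ = (1 − 2ℓ)/4 + ((2ℓ+1)/(2ℓ−1))v + (2/(2ℓ−1))uv²`. -/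
theorem stmt_12
    (ℓ : ℝ) (hℓ : ℓ ≠ 1 / 2)
    (J : Set ℝ) (hJopen : IsOpen J) (hJconn : J.OrdConnected)
    (x y : ℝ → ℝ)
    (hx : ∀ t ∈ J, DifferentiableAt ℝ x t)
    (hy : ∀ t ∈ J, DifferentiableAt ℝ y t)
    (hyne : ∀ t ∈ J, y t ≠ 0)
    (hxd : ∀ t ∈ J, deriv x t = x t * (1 - x t / 2 + y t))
    (hyd : ∀ t ∈ J, deriv y t = y t * (-((2 * ℓ + 1) / (2 * ℓ - 1)) + x t / 2 - y t))
    (u v : ℝ → ℝ)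
    (hu : ∀ t, u t = x t * y t)
    (hv : ∀ t, v t = (1 - 2 * ℓ) / (4 * y t)) :
    ∀ t ∈ J, DifferentiableAt ℝ u t ∧ DifferentiableAt ℝ v t ∧
      deriv u t = 2 * u t / (1 - 2 * ℓ) ∧
      deriv v t = (1 - 2 * ℓ) / 4 + ((2 * ℓ + 1) / (2 * ℓ - 1)) * v t
        + (2 / (2 * ℓ - 1)) * u t * (v t) ^ 2 :=
  stmt_12_general ℓ hℓ J x y hx hy hyne hxd hyd u v hu hv
end

section
/- Let ℓ ∈ ℝ with ℓ ≠ 1/2. Let I ⊆ ℝ be an open interval and w : I → ℝ twice differentiable with u·w''(u) + ((1+2ℓ)/2)·w'(u) − ((1−2ℓ)²/8)·w(u) = 0 for all u ∈ I. Define f(u,v) = w'(u) − v·w(u). Then for all u ∈ I and v ∈ ℝ, (2u/(1−2ℓ))·∂f/∂u(u,v) + [(1−2ℓ)/4 + ((2ℓ+1)/(2ℓ−1))·v + (2/(2ℓ−1))·u·v²]·∂f/∂v(u,v) = ((1 + 2ℓ + 2uv)/(2ℓ−1))·f(u,v). -/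
theorem hasDerivAt_deriv_sub_const_mul {w : ℝ → ℝ} {u : ℝ} (v : ℝ)
    (hw₁ : DifferentiableAt ℝ w u) (hw₂ : DifferentiableAt ℝ (deriv w) u) :
    HasDerivAt (fun t => deriv w t - v * w t) (deriv (deriv w) u - v * deriv w u) u :=
  hw₂.hasDerivAt.sub (hw₁.hasDerivAt.const_mul v)

theorem hasDerivAt_const_sub_mul_const (a b v : ℝ) :
    HasDerivAt (fun t => a - t * b) (-b) v := by
  simpa using ((hasDerivAt_id v).mul_const b).const_sub a

/-- With `w₀, w₁, w₂` for `w u, w' u, w'' u`: once denominators are cleared, this is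
`8 (2ℓ - 1)` times the ODE. -/
theorem lotkaVolterra_cofactor_identity {ℓ u v w₀ w₁ w₂ : ℝ} (hℓ : ℓ ≠ 1 / 2)
    (hode : u * w₂ + ((1 + 2 * ℓ) / 2) * w₁ - ((1 - 2 * ℓ) ^ 2 / 8) * w₀ = 0) :
    (2 * u / (1 - 2 * ℓ)) * (w₂ - v * w₁)
        + ((1 - 2 * ℓ) / 4 + ((2 * ℓ + 1) / (2 * ℓ - 1)) * v
            + (2 / (2 * ℓ - 1)) * u * v ^ 2) * -w₀
      = ((1 + 2 * ℓ + 2 * u * v) / (2 * ℓ - 1)) * (w₁ - v * w₀) := by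
  have h₁ : (1 : ℝ) - 2 * ℓ ≠ 0 := fun h => hℓ (by linarith)
  have h₂ : (2 : ℝ) * ℓ - 1 ≠ 0 := fun h => hℓ (by linarith)
  field_simp
  linear_combination (8 * (2 * ℓ - 1)) * hode

theorem stmt_13_general
    (ℓ : ℝ) (hℓ : ℓ ≠ 1 / 2)
    (I : Set ℝ)
    (w : ℝ → ℝ)
    (hw₁ : ∀ u ∈ I, DifferentiableAt ℝ w u)
    (hw₂ : ∀ u ∈ I, DifferentiableAt ℝ (deriv w) u)
    (hode : ∀ u ∈ I,
      u * deriv (deriv w) u + ((1 + 2 * ℓ) / 2) * deriv w u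
        - ((1 - 2 * ℓ) ^ 2 / 8) * w u = 0)
    (f : ℝ → ℝ → ℝ)
    (hf : ∀ u v, f u v = deriv w u - v * w u) :
    ∀ u ∈ I, ∀ v : ℝ,
      (2 * u / (1 - 2 * ℓ)) * deriv (fun t => f t v) u
        + ((1 - 2 * ℓ) / 4 + ((2 * ℓ + 1) / (2 * ℓ - 1)) * v
            + (2 / (2 * ℓ - 1)) * u * v ^ 2) * deriv (fun t => f u t) v
      = ((1 + 2 * ℓ + 2 * u * v) / (2 * ℓ - 1)) * f u v := by
  intro u hu v
  have hf_u : (fun t => f t v) = fun t => deriv w t - v * w t := funext fun t => hf t v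
  have hf_v : (fun t => f u t) = fun t => deriv w u - t * w u := funext (hf u)
  rw [hf_u, hf_v, (hasDerivAt_deriv_sub_const_mul v (hw₁ u hu) (hw₂ u hu)).deriv,
    (hasDerivAt_const_sub_mul_const _ _ v).deriv, hf]
  exact lotkaVolterra_cofactor_identity hℓ (hode u hu)

/-- Each solution `w` of `u w'' + ((1+2ℓ)/2) w' − ((1−2ℓ)²/8) w = 0` yields an invariant
`f(u,v) = w'(u) − v w(u)` of the transformed Lotka–Volterra system
`u̇ = 2u/(1−2ℓ)`, `v̇ = (1−2ℓ)/4 + ((2ℓ+1)/(2ℓ−1))v + (2/(2ℓ−1))uv²`, with polynomial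
cofactor `(1 + 2ℓ + 2uv)/(2ℓ−1)`. -/
theorem stmt_13
    (ℓ : ℝ) (hℓ : ℓ ≠ 1 / 2)
    (I : Set ℝ) (hIopen : IsOpen I) (hIconn : I.OrdConnected)
    (w : ℝ → ℝ)
    (hw₁ : ∀ u ∈ I, DifferentiableAt ℝ w u)
    (hw₂ : ∀ u ∈ I, DifferentiableAt ℝ (deriv w) u)
    (hode : ∀ u ∈ I,
      u * deriv (deriv w) u + ((1 + 2 * ℓ) / 2) * deriv w u
        - ((1 - 2 * ℓ) ^ 2 / 8) * w u = 0)
    (f : ℝ → ℝ → ℝ)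
    (hf : ∀ u v, f u v = deriv w u - v * w u) :
    ∀ u ∈ I, ∀ v : ℝ,
      (2 * u / (1 - 2 * ℓ)) * deriv (fun t => f t v) u
        + ((1 - 2 * ℓ) / 4 + ((2 * ℓ + 1) / (2 * ℓ - 1)) * v
            + (2 / (2 * ℓ - 1)) * u * v ^ 2) * deriv (fun t => f u t) v
      = ((1 + 2 * ℓ + 2 * u * v) / (2 * ℓ - 1)) * f u v :=
  stmt_13_general ℓ hℓ I w hw₁ hw₂ hode f hf
end

section
/- Let ℓ ∈ ℝ with ℓ ≠ 1/2. Let I ⊆ ℝ be an open interval and let w₁, w₂ : I → ℝ be twice differentiable solutions of u·w''(u) + ((1+2ℓ)/2)·w'(u) − ((1−2ℓ)²/8)·w(u) = 0 on I. Define fᵢ(u,v) = wᵢ'(u) − v·wᵢ(u) for i = 1,2, and H(u,v) = f₁(u,v)/f₂(u,v). Then at every point (u,v) with u ∈ I and f₂(u,v) ≠ 0, one has (2u/(1−2ℓ))·∂H/∂u(u,v) + [(1−2ℓ)/4 + ((2ℓ+1)/(2ℓ−1))·v + (2/(2ℓ−1))·u·v²]·∂H/∂v(u,v) = 0. -/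
/-!
Each `fᵢ = wᵢ' − v wᵢ` is a Darboux invariant of the vector field: differentiating along the
field `X = P ∂ᵤ + Q ∂ᵥ` and eliminating `u wᵢ''` with the ODE gives `X fᵢ = K fᵢ` with the common cofactor
`K = (1 + 2ℓ + 2uv)/(2ℓ − 1)`. By the quotient rule `X (f₁/f₂) = (f₂ X f₁ − f₁ X f₂)/f₂²`,
and the numerator is `f₂ K f₁ − f₁ K f₂ = 0`.
-/

/-- `f` is an invariant with cofactor `K` of the vector field `(P, Q)`, tested only at the point
`(u, v)`: `P`, `Q`, `K` are the values of the field and cofactor there. -/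
def IsInvariantAt (P Q K : ℝ) (f : ℝ → ℝ → ℝ) (u v : ℝ) : Prop :=
  ∃ fu fv : ℝ, HasDerivAt (fun t => f t v) fu u ∧ HasDerivAt (f u) fv v ∧
    P * fu + Q * fv = K * f u v

theorem IsInvariantAt.div {P Q K : ℝ} {f₁ f₂ : ℝ → ℝ → ℝ} {u v : ℝ}
    (h₁ : IsInvariantAt P Q K f₁ u v) (h₂ : IsInvariantAt P Q K f₂ u v) (hf₂ : f₂ u v ≠ 0) :
    P * deriv (fun t => f₁ t v / f₂ t v) u + Q * deriv (fun t => f₁ u t / f₂ u t) v = 0 := by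
  obtain ⟨a_u, a_v, ha_u, ha_v, ha⟩ := h₁
  obtain ⟨b_u, b_v, hb_u, hb_v, hb⟩ := h₂
  rw [(ha_u.fun_div hb_u hf₂).deriv, (ha_v.fun_div hb_v hf₂).deriv]
  set a := f₁ u v
  set b := f₂ u v
  calc P * ((a_u * b - a * b_u) / b ^ 2) + Q * ((a_v * b - a * b_v) / b ^ 2)
      = (b * (P * a_u + Q * a_v) - a * (P * b_u + Q * b_v)) / b ^ 2 := by ring
    _ = (b * (K * a) - a * (K * b)) / b ^ 2 := by rw [ha, hb]
    _ = 0 := by ring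

theorem isInvariantAt_deriv_sub_mul {ℓ : ℝ} (hℓ : ℓ ≠ 1 / 2) {w : ℝ → ℝ} {u : ℝ}
    (hw : DifferentiableAt ℝ w u) (hw' : DifferentiableAt ℝ (deriv w) u)
    (hode : u * deriv (deriv w) u + ((1 + 2 * ℓ) / 2) * deriv w u
      - ((1 - 2 * ℓ) ^ 2 / 8) * w u = 0) (v : ℝ) :
    IsInvariantAt (2 * u / (1 - 2 * ℓ))
      ((1 - 2 * ℓ) / 4 + ((2 * ℓ + 1) / (2 * ℓ - 1)) * v + (2 / (2 * ℓ - 1)) * u * v ^ 2)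
      ((1 + 2 * ℓ + 2 * u * v) / (2 * ℓ - 1)) (fun u v => deriv w u - v * w u) u v := by
  refine ⟨_, _, hw'.hasDerivAt.sub (hw.hasDerivAt.const_mul v),
    ((hasDerivAt_id v).mul_const (w u)).const_sub _, ?_⟩
  have hc : 1 - 2 * ℓ ≠ 0 := by contrapose! hℓ; linarith
  have hc' : 2 * ℓ - 1 ≠ 0 := by contrapose! hℓ; linarith
  linear_combination (norm := skip) (2 / (1 - 2 * ℓ)) * hode
  field_simp
  ring

theorem stmt_14_general
    (ℓ : ℝ) (hℓ : ℓ ≠ 1 / 2)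
    (I : Set ℝ)
    (w₁ w₂ : ℝ → ℝ)
    (hw₁₁ : ∀ u ∈ I, DifferentiableAt ℝ w₁ u)
    (hw₁₂ : ∀ u ∈ I, DifferentiableAt ℝ (deriv w₁) u)
    (hode₁ : ∀ u ∈ I,
      u * deriv (deriv w₁) u + ((1 + 2 * ℓ) / 2) * deriv w₁ u
        - ((1 - 2 * ℓ) ^ 2 / 8) * w₁ u = 0)
    (hw₂₁ : ∀ u ∈ I, DifferentiableAt ℝ w₂ u)
    (hw₂₂ : ∀ u ∈ I, DifferentiableAt ℝ (deriv w₂) u)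
    (hode₂ : ∀ u ∈ I,
      u * deriv (deriv w₂) u + ((1 + 2 * ℓ) / 2) * deriv w₂ u
        - ((1 - 2 * ℓ) ^ 2 / 8) * w₂ u = 0)
    (f₁ f₂ : ℝ → ℝ → ℝ)
    (hf₁ : ∀ u v, f₁ u v = deriv w₁ u - v * w₁ u)
    (hf₂ : ∀ u v, f₂ u v = deriv w₂ u - v * w₂ u)
    (H : ℝ → ℝ → ℝ)
    (hH : ∀ u v, H u v = f₁ u v / f₂ u v) :
    ∀ u ∈ I, ∀ v : ℝ, f₂ u v ≠ 0 →
      (2 * u / (1 - 2 * ℓ)) * deriv (fun t => H t v) u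
        + ((1 - 2 * ℓ) / 4 + ((2 * ℓ + 1) / (2 * ℓ - 1)) * v
            + (2 / (2 * ℓ - 1)) * u * v ^ 2) * deriv (fun t => H u t) v = 0 := by
  intro u hu v hf₂uv
  obtain rfl : H = fun u v => f₁ u v / f₂ u v := funext fun u => funext (hH u)
  obtain rfl : f₁ = fun u v => deriv w₁ u - v * w₁ u := funext fun u => funext (hf₁ u)
  obtain rfl : f₂ = fun u v => deriv w₂ u - v * w₂ u := funext fun u => funext (hf₂ u)
  exact (isInvariantAt_deriv_sub_mul hℓ (hw₁₁ u hu) (hw₁₂ u hu) (hode₁ u hu) v).div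
    (isInvariantAt_deriv_sub_mul hℓ (hw₂₁ u hu) (hw₂₂ u hu) (hode₂ u hu) v) hf₂uv

/-- For two solutions `w₁, w₂` of `u w'' + ((1+2ℓ)/2) w' − ((1−2ℓ)²/8) w = 0`, the
quotient `H = f₁/f₂` of the invariants `fᵢ(u,v) = wᵢ'(u) − v wᵢ(u)` is a first integral
of the transformed Lotka–Volterra system
`u̇ = 2u/(1−2ℓ)`, `v̇ = (1−2ℓ)/4 + ((2ℓ+1)/(2ℓ−1))v + (2/(2ℓ−1))uv²`
wherever `f₂ ≠ 0`. -/
theorem stmt_14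
    (ℓ : ℝ) (hℓ : ℓ ≠ 1 / 2)
    (I : Set ℝ) (hIopen : IsOpen I) (hIconn : I.OrdConnected)
    (w₁ w₂ : ℝ → ℝ)
    (hw₁₁ : ∀ u ∈ I, DifferentiableAt ℝ w₁ u)
    (hw₁₂ : ∀ u ∈ I, DifferentiableAt ℝ (deriv w₁) u)
    (hode₁ : ∀ u ∈ I,
      u * deriv (deriv w₁) u + ((1 + 2 * ℓ) / 2) * deriv w₁ u
        - ((1 - 2 * ℓ) ^ 2 / 8) * w₁ u = 0)
    (hw₂₁ : ∀ u ∈ I, DifferentiableAt ℝ w₂ u)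
    (hw₂₂ : ∀ u ∈ I, DifferentiableAt ℝ (deriv w₂) u)
    (hode₂ : ∀ u ∈ I,
      u * deriv (deriv w₂) u + ((1 + 2 * ℓ) / 2) * deriv w₂ u
        - ((1 - 2 * ℓ) ^ 2 / 8) * w₂ u = 0)
    (f₁ f₂ : ℝ → ℝ → ℝ)
    (hf₁ : ∀ u v, f₁ u v = deriv w₁ u - v * w₁ u)
    (hf₂ : ∀ u v, f₂ u v = deriv w₂ u - v * w₂ u)
    (H : ℝ → ℝ → ℝ)
    (hH : ∀ u v, H u v = f₁ u v / f₂ u v) :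
    ∀ u ∈ I, ∀ v : ℝ, f₂ u v ≠ 0 →
      (2 * u / (1 - 2 * ℓ)) * deriv (fun t => H t v) u
        + ((1 - 2 * ℓ) / 4 + ((2 * ℓ + 1) / (2 * ℓ - 1)) * v
            + (2 / (2 * ℓ - 1)) * u * v ^ 2) * deriv (fun t => H u t) v = 0 :=
  stmt_14_general ℓ hℓ I w₁ w₂ hw₁₁ hw₁₂ hode₁ hw₂₁ hw₂₂ hode₂ f₁ f₂ hf₁ hf₂ H hH
end

section
/- Let a, ℓ ∈ ℝ. Let x, y : J → ℝ be differentiable functions on an open interval J ⊆ ℝ with x(t) ≠ 0 for all t ∈ J, satisfying ẋ = (2a−1)ℓx − a(2ℓ−1)y + 2a(a−ℓ)(2ℓ−1)x² − 2a²(2ℓ−1)²xy and ẏ = y·(2(2a−1)ℓ + 2a(2a−2ℓ−1)(2ℓ−1)x − 4a²(2ℓ−1)²y). Define X(t) = y(t)/x(t)² and Y(t) = x(t). Then X and Y are differentiable on J and satisfy Ẋ = 2a(2ℓ−1)(X−1)XY and Ẏ = Y·((2a−1)ℓ + a(2ℓ−1)(2a−2ℓ−X)Y − 2a²(2ℓ−1)²XY²).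 -/
/-! Because `Y = x`, the equation for `Ẏ` is that for `ẋ` with `y` replaced by `X Y²`. The quotient
rule gives `Ẋ = (ẏ x − 2 y ẋ)/x³`, which for `x ≠ 0` simplifies to `2a(2ℓ−1)(X−1)XY` after substituting
the two vector fields. -/

theorem HasDerivAt.div_sq {𝕜 : Type*} [NontriviallyNormedField 𝕜] {f g : 𝕜 → 𝕜} {f' g' t : 𝕜}
    (hf : HasDerivAt f f' t) (hg : HasDerivAt g g' t) (hft : f t ≠ 0) :
    HasDerivAt (fun s => g s / f s ^ 2) ((g' * f t - 2 * g t * f') / f t ^ 3) t := by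
  refine (hg.fun_div (hf.fun_pow 2) (pow_ne_zero 2 hft)).congr_deriv ?_
  field_simp
  ring

section VectorFields

variable (a ℓ : ℝ)

def originalFieldX (x y : ℝ) : ℝ :=
  (2 * a - 1) * ℓ * x - a * (2 * ℓ - 1) * y + 2 * a * (a - ℓ) * (2 * ℓ - 1) * x ^ 2
    - 2 * a ^ 2 * (2 * ℓ - 1) ^ 2 * x * y

def originalFieldY (x y : ℝ) : ℝ :=
  y * (2 * (2 * a - 1) * ℓ + 2 * a * (2 * a - 2 * ℓ - 1) * (2 * ℓ - 1) * x
    - 4 * a ^ 2 * (2 * ℓ - 1) ^ 2 * y)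

def transformedFieldX (X Y : ℝ) : ℝ :=
  2 * a * (2 * ℓ - 1) * (X - 1) * X * Y

def transformedFieldY (X Y : ℝ) : ℝ :=
  Y * ((2 * a - 1) * ℓ + a * (2 * ℓ - 1) * (2 * a - 2 * ℓ - X) * Y
    - 2 * a ^ 2 * (2 * ℓ - 1) ^ 2 * X * Y ^ 2)

variable {a ℓ}

theorem transformedFieldX_eq {x y : ℝ} (hx : x ≠ 0) :
    transformedFieldX a ℓ (y / x ^ 2) x
      = (originalFieldY a ℓ x y * x - 2 * y * originalFieldX a ℓ x y) / x ^ 3 := by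
  unfold transformedFieldX originalFieldX originalFieldY
  field_simp
  ring

theorem transformedFieldY_eq {x y : ℝ} (hx : x ≠ 0) :
    transformedFieldY a ℓ (y / x ^ 2) x = originalFieldX a ℓ x y := by
  unfold transformedFieldY originalFieldX
  field_simp
  ring

end VectorFields

theorem stmt_16_general
    (a ℓ : ℝ)
    (J : Set ℝ)
    (x y : ℝ → ℝ)
    (hx : ∀ t ∈ J, DifferentiableAt ℝ x t)
    (hy : ∀ t ∈ J, DifferentiableAt ℝ y t)
    (hxne : ∀ t ∈ J, x t ≠ 0)
    (hxd : ∀ t ∈ J, deriv x t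
      = (2 * a - 1) * ℓ * x t - a * (2 * ℓ - 1) * y t
        + 2 * a * (a - ℓ) * (2 * ℓ - 1) * (x t) ^ 2
        - 2 * a ^ 2 * (2 * ℓ - 1) ^ 2 * x t * y t)
    (hyd : ∀ t ∈ J, deriv y t
      = y t * (2 * (2 * a - 1) * ℓ + 2 * a * (2 * a - 2 * ℓ - 1) * (2 * ℓ - 1) * x t
        - 4 * a ^ 2 * (2 * ℓ - 1) ^ 2 * y t))
    (X Y : ℝ → ℝ)
    (hX : ∀ t, X t = y t / (x t) ^ 2)
    (hY : ∀ t, Y t = x t) :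
    ∀ t ∈ J, DifferentiableAt ℝ X t ∧ DifferentiableAt ℝ Y t ∧
      deriv X t = 2 * a * (2 * ℓ - 1) * (X t - 1) * X t * Y t ∧
      deriv Y t = Y t * ((2 * a - 1) * ℓ
        + a * (2 * ℓ - 1) * (2 * a - 2 * ℓ - X t) * Y t
        - 2 * a ^ 2 * (2 * ℓ - 1) ^ 2 * X t * (Y t) ^ 2) := by
  obtain rfl : X = fun s => y s / x s ^ 2 := funext hX
  obtain rfl : x = Y := (funext hY).symm
  intro t ht
  have hxt : HasDerivAt x (originalFieldX a ℓ (x t) (y t)) t :=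
    (hx t ht).hasDerivAt.congr_deriv (hxd t ht)
  have hyt : HasDerivAt y (originalFieldY a ℓ (x t) (y t)) t :=
    (hy t ht).hasDerivAt.congr_deriv (hyd t ht)
  have hXt := hxt.div_sq hyt (hxne t ht)
  rw [← transformedFieldX_eq (hxne t ht)] at hXt
  rw [← transformedFieldY_eq (hxne t ht)] at hxt
  exact ⟨hXt.differentiableAt, hxt.differentiableAt, hXt.deriv, hxt.deriv⟩

/-- The birational transformation `X = y/x²`, `Y = x` carries the new biparametric
family of quadratic systems
`ẋ = (2a−1)ℓx − a(2ℓ−1)y + 2a(a−ℓ)(2ℓ−1)x² − 2a²(2ℓ−1)²xy`,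
`ẏ = y(2(2a−1)ℓ + 2a(2a−2ℓ−1)(2ℓ−1)x − 4a²(2ℓ−1)²y)` into
`Ẋ = 2a(2ℓ−1)(X−1)XY`, `Ẏ = Y((2a−1)ℓ + a(2ℓ−1)(2a−2ℓ−X)Y − 2a²(2ℓ−1)²XY²)`. -/
theorem stmt_16
    (a ℓ : ℝ)
    (J : Set ℝ) (hJopen : IsOpen J) (hJconn : J.OrdConnected)
    (x y : ℝ → ℝ)
    (hx : ∀ t ∈ J, DifferentiableAt ℝ x t)
    (hy : ∀ t ∈ J, DifferentiableAt ℝ y t)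
    (hxne : ∀ t ∈ J, x t ≠ 0)
    (hxd : ∀ t ∈ J, deriv x t
      = (2 * a - 1) * ℓ * x t - a * (2 * ℓ - 1) * y t
        + 2 * a * (a - ℓ) * (2 * ℓ - 1) * (x t) ^ 2
        - 2 * a ^ 2 * (2 * ℓ - 1) ^ 2 * x t * y t)
    (hyd : ∀ t ∈ J, deriv y t
      = y t * (2 * (2 * a - 1) * ℓ + 2 * a * (2 * a - 2 * ℓ - 1) * (2 * ℓ - 1) * x t
        - 4 * a ^ 2 * (2 * ℓ - 1) ^ 2 * y t))
    (X Y : ℝ → ℝ)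
    (hX : ∀ t, X t = y t / (x t) ^ 2)
    (hY : ∀ t, Y t = x t) :
    ∀ t ∈ J, DifferentiableAt ℝ X t ∧ DifferentiableAt ℝ Y t ∧
      deriv X t = 2 * a * (2 * ℓ - 1) * (X t - 1) * X t * Y t ∧
      deriv Y t = Y t * ((2 * a - 1) * ℓ
        + a * (2 * ℓ - 1) * (2 * a - 2 * ℓ - X t) * Y t
        - 2 * a ^ 2 * (2 * ℓ - 1) ^ 2 * X t * (Y t) ^ 2) :=
  stmt_16_general a ℓ J x y hx hy hxne hxd hyd X Y hX hY
end

section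
/- Let a, ℓ ∈ ℝ. Let I ⊆ ℝ be an open interval with 1 ∉ I and let w : I → ℝ be twice differentiable with 2X(X−1)²·w''(X) + (2ℓ−2a+3X)(X−1)·w'(X) + ℓ(1−2a)·w(X) = 0 for all X ∈ I. Define f(X,Y) = w'(X) − (a(2ℓ−1)Y/(X−1))·w(X). Then for all X ∈ I and Y ∈ ℝ: 2a(2ℓ−1)(X−1)XY·∂f/∂X(X,Y) + Y·((2a−1)ℓ + a(2ℓ−1)(2a−2ℓ−X)Y − 2a²(2ℓ−1)²XY²)·∂f/∂Y(X,Y) = [−a(2ℓ−1)(2ℓ−2a+3X)Y − 2a²(2ℓ−1)²XY²]·f(X,Y). -/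
/-!
With `c = a(2ℓ−1)Y`, the partial derivatives of `f = w' − c w/(X−1)` are
`f_X = w'' − c (w'(X−1) − w)/(X−1)²` and `f_Y = −a(2ℓ−1) w/(X−1)`. Substituting them, the
defect `Ẋ f_X + Ẏ f_Y − k f` of the invariance equation is exactly `c/(X−1)` times the left-hand
side of the hypergeometric equation for `w`, so it vanishes wherever `w` solves it.
-/

lemma hasDerivAt_sub_div_sub_one_mul {u v : ℝ → ℝ} {u' v' X : ℝ} (c : ℝ)
    (hu : HasDerivAt u u' X) (hv : HasDerivAt v v' X) (hX : X ≠ 1) :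
    HasDerivAt (fun t => u t - c / (t - 1) * v t)
      (u' - c * (v' * (X - 1) - v X) / (X - 1) ^ 2) X := by
  have hquot : HasDerivAt (fun t => c * v t / (t - 1))
      ((c * v' * (X - 1) - c * v X * 1) / (X - 1) ^ 2) X :=
    (hv.const_mul c).div ((hasDerivAt_id X).sub_const 1) (sub_ne_zero.mpr hX)
  simp only [div_mul_eq_mul_div]
  exact (hu.sub hquot).congr_deriv (by ring)

theorem stmt_17_general
    (a ℓ : ℝ)
    (I : Set ℝ) (h1I : (1:ℝ) ∉ I)
    (w : ℝ → ℝ)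
    (hw₁ : ∀ X ∈ I, DifferentiableAt ℝ w X)
    (hw₂ : ∀ X ∈ I, DifferentiableAt ℝ (deriv w) X)
    (hode : ∀ X ∈ I,
      2 * X * (X - 1) ^ 2 * deriv (deriv w) X
        + (2 * ℓ - 2 * a + 3 * X) * (X - 1) * deriv w X
        + ℓ * (1 - 2 * a) * w X = 0)
    (f : ℝ → ℝ → ℝ)
    (hf : ∀ X Y, f X Y = deriv w X - (a * (2 * ℓ - 1) * Y / (X - 1)) * w X) :
    ∀ X ∈ I, ∀ Y : ℝ,
      2 * a * (2 * ℓ - 1) * (X - 1) * X * Y * deriv (fun t => f t Y) X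
        + Y * ((2 * a - 1) * ℓ + a * (2 * ℓ - 1) * (2 * a - 2 * ℓ - X) * Y
            - 2 * a ^ 2 * (2 * ℓ - 1) ^ 2 * X * Y ^ 2) * deriv (fun t => f X t) Y
      = (-(a * (2 * ℓ - 1) * (2 * ℓ - 2 * a + 3 * X) * Y)
          - 2 * a ^ 2 * (2 * ℓ - 1) ^ 2 * X * Y ^ 2) * f X Y := by
  intro X hX Y
  have hX1 : X ≠ 1 := fun h => h1I (h ▸ hX)
  have hfX : deriv (fun t => f t Y) X = deriv (deriv w) X
      - a * (2 * ℓ - 1) * Y * (deriv w X * (X - 1) - w X) / (X - 1) ^ 2 := by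
    simp_rw [hf]
    exact (hasDerivAt_sub_div_sub_one_mul _ (hw₂ X hX).hasDerivAt (hw₁ X hX).hasDerivAt
      hX1).deriv
  have hfY : deriv (fun t => f X t) Y = -(a * (2 * ℓ - 1) / (X - 1) * w X) := by
    simp_rw [hf]
    simp
  rw [hfX, hfY, hf]
  field_simp [sub_ne_zero.mpr hX1]
  linear_combination (a * (2 * ℓ - 1) * Y) * hode X hX

/-- Every solution `w` of `2X(X−1)² w'' + (2ℓ−2a+3X)(X−1) w' + ℓ(1−2a) w = 0` yields an
invariant `f(X,Y) = w'(X) − (a(2ℓ−1)Y/(X−1)) w(X)` of the system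
`Ẋ = 2a(2ℓ−1)(X−1)XY`, `Ẏ = Y((2a−1)ℓ + a(2ℓ−1)(2a−2ℓ−X)Y − 2a²(2ℓ−1)²XY²)`,
with polynomial cofactor `−a(2ℓ−1)(2ℓ−2a+3X)Y − 2a²(2ℓ−1)²XY²`. -/
theorem stmt_17
    (a ℓ : ℝ)
    (I : Set ℝ) (hIopen : IsOpen I) (hIconn : I.OrdConnected) (h1I : (1:ℝ) ∉ I)
    (w : ℝ → ℝ)
    (hw₁ : ∀ X ∈ I, DifferentiableAt ℝ w X)
    (hw₂ : ∀ X ∈ I, DifferentiableAt ℝ (deriv w) X)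
    (hode : ∀ X ∈ I,
      2 * X * (X - 1) ^ 2 * deriv (deriv w) X
        + (2 * ℓ - 2 * a + 3 * X) * (X - 1) * deriv w X
        + ℓ * (1 - 2 * a) * w X = 0)
    (f : ℝ → ℝ → ℝ)
    (hf : ∀ X Y, f X Y = deriv w X - (a * (2 * ℓ - 1) * Y / (X - 1)) * w X) :
    ∀ X ∈ I, ∀ Y : ℝ,
      2 * a * (2 * ℓ - 1) * (X - 1) * X * Y * deriv (fun t => f t Y) X
        + Y * ((2 * a - 1) * ℓ + a * (2 * ℓ - 1) * (2 * a - 2 * ℓ - X) * Y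
            - 2 * a ^ 2 * (2 * ℓ - 1) ^ 2 * X * Y ^ 2) * deriv (fun t => f X t) Y
      = (-(a * (2 * ℓ - 1) * (2 * ℓ - 2 * a + 3 * X) * Y)
          - 2 * a ^ 2 * (2 * ℓ - 1) ^ 2 * X * Y ^ 2) * f X Y :=
  stmt_17_general a ℓ I h1I w hw₁ hw₂ hode f hf
end

section
/- Let a, b, d ∈ ℝ and define P(x,y) = y + a·x·y, Q(x,y) = −x + d·x² − b·y², and f(x,y) = −b(a+b)(a+2b)·y² + b(a+2b)d·x² − 2b(a+b+d)·x + (a+b+d). Then for all (x,y) ∈ ℝ²: P(x,y)·∂f/∂x(x,y) + Q(x,y)·∂f/∂y(x,y) = −2b·y·f(x,y). In particular, f(x,y) = 0 is an invariant algebraic curve (a conic) of the quadratic system ẋ = y + axy, ẏ = −x + dx² − by², with polynomial cofactor −2by. -/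
section Quadratic

variable {𝕜 : Type*} [NontriviallyNormedField 𝕜]

theorem hasDerivAt_quadratic (α β γ x : 𝕜) :
    HasDerivAt (fun t => α * t ^ 2 + β * t + γ) (2 * α * x + β) x := by
  refine ((((hasDerivAt_pow 2 x).const_mul α).add
    ((hasDerivAt_id x).const_mul β)).add_const γ).congr_deriv ?_
  norm_num
  ring

theorem deriv_quadratic (α β γ x : 𝕜) :
    deriv (fun t => α * t ^ 2 + β * t + γ) x = 2 * α * x + β :=
  (hasDerivAt_quadratic α β γ x).deriv

end Quadratic

/-- The conic `f(x,y) = −b(a+b)(a+2b)y² + b(a+2b)d x² − 2b(a+b+d)x + (a+b+d) = 0` is an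
invariant algebraic curve of the quadratic system `ẋ = y + axy`, `ẏ = −x + dx² − by²`,
with polynomial cofactor `−2by`. -/
theorem stmt_18
    (a b d : ℝ)
    (P Q f : ℝ → ℝ → ℝ)
    (hP : ∀ x y, P x y = y + a * x * y)
    (hQ : ∀ x y, Q x y = -x + d * x ^ 2 - b * y ^ 2)
    (hf : ∀ x y, f x y = -(b * (a + b) * (a + 2 * b)) * y ^ 2
      + b * (a + 2 * b) * d * x ^ 2 - 2 * b * (a + b + d) * x + (a + b + d)) :
    ∀ x y : ℝ,
      P x y * deriv (fun t => f t y) x + Q x y * deriv (fun t => f x t) y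
        = -(2 * b) * y * f x y := by
  intro x y
  have hfx : (fun t => f t y) = fun t => b * (a + 2 * b) * d * t ^ 2
      + -(2 * b * (a + b + d)) * t + (-(b * (a + b) * (a + 2 * b)) * y ^ 2 + (a + b + d)) := by
    funext t; rw [hf]; ring
  have hfy : (fun t => f x t) = fun t => -(b * (a + b) * (a + 2 * b)) * t ^ 2
      + 0 * t + (b * (a + 2 * b) * d * x ^ 2 - 2 * b * (a + b + d) * x + (a + b + d)) := by
    funext t; rw [hf]; ring
  rw [hfx, hfy, deriv_quadratic, deriv_quadratic, hP, hQ, hf]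
  ring
end
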